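/- arXiv:2506.16496 — 5 statements merged into one kernel-verified Lean document; each statement's English description precedes it below -/
import Mathlib

section
/- Let q ≥ 3 be a prime written as q = q₀ + q₁ − 1 with q₀ < q₁ primes, let m ≥ 1 be a squarefree integer with q ∤ m, and let q₂ be a prime with q₂ ≡ −1 (mod q). Define G(x) = q·a(x)·b(x) where a(x) = ∏_{i=1}^{q₀−1}(x + i·q₂·m·(q−1)!) and b(x) = ∏_{j=1}^{q₁−1}(x + j·m·(q−1)!), and let F₀(x) = ∫₀ˣ G(t) dt. Then F₀(x) has integer coefficients. -/
open Polynomial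

/-- `a(x) = ∏_{i=1}^{q₀-1} (x + i·q₂·m·(q-1)!)`. -/
noncomputable def aPoly (q₀ q₂ q : ℕ) (m : ℤ) : Polynomial ℤ :=
  ∏ i ∈ Finset.Icc 1 (q₀ - 1), (X + C ((i : ℤ) * q₂ * m * (Nat.factorial (q - 1) : ℤ)))

/-- `b(x) = ∏_{j=1}^{q₁-1} (x + j·m·(q-1)!)`. -/
noncomputable def bPoly (q₁ q : ℕ) (m : ℤ) : Polynomial ℤ :=
  ∏ j ∈ Finset.Icc 1 (q₁ - 1), (X + C ((j : ℤ) * m * (Nat.factorial (q - 1) : ℤ)))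

/-- `G(x) = q · a(x) · b(x)`. -/
noncomputable def GPoly (q₀ q₁ q₂ q : ℕ) (m : ℤ) : Polynomial ℤ :=
  C (q : ℤ) * aPoly q₀ q₂ q m * bPoly q₁ q m

/-- `F₀(x) = ∫₀ˣ G(t) dt`, as a polynomial with rational coefficients. -/
noncomputable def F0 (q₀ q₁ q₂ q : ℕ) (m : ℤ) : Polynomial ℚ :=
  ∑ k ∈ Finset.range ((GPoly q₀ q₁ q₂ q m).natDegree + 1),
    C (((GPoly q₀ q₁ q₂ q m).coeff k : ℚ) / (k + 1)) * X ^ (k + 1)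

/-- Lemma 3.1: `F₀` has integer coefficients. -/
theorem F0_integer_coeffs (q₀ q₁ q₂ q : ℕ) (m : ℤ)
    (hq₀ : Nat.Prime q₀) (hq₁ : Nat.Prime q₁) (hlt : q₀ < q₁)
    (hq : Nat.Prime q) (hq3 : 3 ≤ q) (hqeq : q = q₀ + q₁ - 1)
    (hm : 1 ≤ m) (hmsf : Squarefree m) (hqm : ¬ (q : ℤ) ∣ m)
    (hq₂ : Nat.Prime q₂) (hcong : (q₂ : ℤ) ≡ -1 [ZMOD (q : ℤ)]) :
    ∃ Fz : Polynomial ℤ, Fz.map (Int.castRingHom ℚ) = F0 q₀ q₁ q₂ q m := by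
  classical
  set f := Nat.factorial (q - 1) with hf
  have hq₀2 : 2 ≤ q₀ := hq₀.two_le
  have hq₁2 : 2 ≤ q₁ := hq₁.two_le
  have hma : (aPoly q₀ q₂ q m).Monic :=
    monic_prod_of_monic _ _ fun i _ => monic_X_add_C _
  have hmb : (bPoly q₁ q m).Monic :=
    monic_prod_of_monic _ _ fun j _ => monic_X_add_C _
  have hda : (aPoly q₀ q₂ q m).natDegree = q₀ - 1 := by
    rw [aPoly, natDegree_prod_of_monic _ _ (fun i _ => monic_X_add_C _),
      Finset.sum_congr rfl (fun i _ => natDegree_X_add_C _)]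
    simp [Nat.card_Icc]
  have hdb : (bPoly q₁ q m).natDegree = q₁ - 1 := by
    rw [bPoly, natDegree_prod_of_monic _ _ (fun j _ => monic_X_add_C _),
      Finset.sum_congr rfl (fun j _ => natDegree_X_add_C _)]
    simp [Nat.card_Icc]
  have hdab : (aPoly q₀ q₂ q m * bPoly q₁ q m).natDegree = q - 1 := by
    rw [natDegree_mul hma.ne_zero hmb.ne_zero, hda, hdb]; omega
  have hqz : (q : ℤ) ≠ 0 := by exact_mod_cast hq.ne_zero
  have hGeq : GPoly q₀ q₁ q₂ q m = C (q : ℤ) * (aPoly q₀ q₂ q m * bPoly q₁ q m) := by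
    rw [GPoly, mul_assoc]
  have hdG : (GPoly q₀ q₁ q₂ q m).natDegree = q - 1 := by
    rw [hGeq, natDegree_C_mul hqz, hdab]
  haveI : NeZero f := ⟨(Nat.factorial_pos _).ne'⟩
  -- product maps to X^(deg) mod f
  have hdvdf : ∀ k < q - 1, (f : ℤ) ∣ (aPoly q₀ q₂ q m * bPoly q₁ q m).coeff k := by
    intro k hk
    have hmap : (aPoly q₀ q₂ q m * bPoly q₁ q m).map (Int.castRingHom (ZMod f))
        = X ^ (q - 1) := by
      rw [Polynomial.map_mul, aPoly, bPoly, Polynomial.map_prod, Polynomial.map_prod]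
      have ha : ∀ i ∈ Finset.Icc 1 (q₀ - 1),
          (X + C ((i : ℤ) * q₂ * m * (f : ℤ))).map (Int.castRingHom (ZMod f)) = X := by
        intro i _
        rw [Polynomial.map_add, Polynomial.map_X, Polynomial.map_C]
        have : ((((i : ℤ) * q₂ * m * (f : ℤ)) : ℤ) : ZMod f) = 0 := by
          rw [ZMod.intCast_zmod_eq_zero_iff_dvd]
          exact ⟨(i : ℤ) * q₂ * m, by ring⟩
        simp [this]
      have hb : ∀ j ∈ Finset.Icc 1 (q₁ - 1),
          (X + C ((j : ℤ) * m * (f : ℤ))).map (Int.castRingHom (ZMod f)) = X := by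
        intro j _
        rw [Polynomial.map_add, Polynomial.map_X, Polynomial.map_C]
        have : ((((j : ℤ) * m * (f : ℤ)) : ℤ) : ZMod f) = 0 := by
          rw [ZMod.intCast_zmod_eq_zero_iff_dvd]
          exact ⟨(j : ℤ) * m, by ring⟩
        simp [this]
      rw [Finset.prod_congr rfl ha, Finset.prod_congr rfl hb]
      rw [Finset.prod_const, Finset.prod_const, ← pow_add]
      congr 1
      simp [Nat.card_Icc]
      omega
    have h0 : (((aPoly q₀ q₂ q m * bPoly q₁ q m).coeff k : ℤ) : ZMod f) = 0 := by
      have := congrArg (fun p => Polynomial.coeff p k) hmap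
      simp only [Polynomial.coeff_map, Polynomial.coeff_X_pow, if_neg hk.ne] at this
      exact this
    exact (ZMod.intCast_zmod_eq_zero_iff_dvd _ _).mp h0
  refine ⟨∑ k ∈ Finset.range ((GPoly q₀ q₁ q₂ q m).natDegree + 1),
      C ((GPoly q₀ q₁ q₂ q m).coeff k / ((k : ℤ) + 1)) * X ^ (k + 1), ?_⟩
  rw [Polynomial.map_sum, F0]
  refine Finset.sum_congr rfl fun k hk => ?_
  rw [Polynomial.map_mul, Polynomial.map_pow, Polynomial.map_X, map_C]
  congr 2
  have hkle : k ≤ q - 1 := by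
    rw [Finset.mem_range, hdG] at hk; omega
  have hdvd : ((k : ℤ) + 1) ∣ (GPoly q₀ q₁ q₂ q m).coeff k := by
    rcases eq_or_lt_of_le hkle with heq | hlt'
    · have hkq : (k : ℤ) + 1 = (q : ℤ) := by
        have : k + 1 = q := by omega
        exact_mod_cast this
      rw [hkq, hGeq, coeff_C_mul]
      exact Dvd.intro _ rfl
    · have h1 : (k + 1) ∣ f := Nat.dvd_factorial (Nat.succ_pos k) (by omega)
      have h2 : ((k : ℤ) + 1) ∣ (f : ℤ) := by exact_mod_cast Int.natCast_dvd_natCast.mpr h1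
      rw [hGeq, coeff_C_mul]
      exact Dvd.dvd.mul_left (h2.trans (hdvdf k hlt')) _
  rw [eq_div_iff (by positivity : ((k : ℚ) + 1) ≠ 0)]
  simp only [eq_intCast]
  rw [show ((k : ℚ) + 1) = (((k : ℤ) + 1 : ℤ) : ℚ) by push_cast; ring, ← Int.cast_mul,
    Int.ediv_mul_cancel hdvd]
end

section
/- With notation as follows: q = q₀ + q₁ − 1 a prime with q₀ < q₁ primes, m ≥ 1 squarefree with q ∤ m, q₂ a prime with q₂ ≡ −1 (mod q), a(x) = ∏_{i=1}^{q₀−1}(x + i·q₂·m·(q−1)!), b(x) = ∏_{j=1}^{q₁−1}(x + j·m·(q−1)!), G = q·a·b, F₀ = ∫₀ˣ G. Define C_i = F₀(−i·q₂·m·(q−1)!)/m for 1 ≤ i ≤ q₀−1 and D_j = F₀(−j·m·(q−1)!)/m for 1 ≤ j ≤ q₁−1. Then C_i ≡ i·q₂ (mod q) and D_j ≡ j (mod q), and C_i ≠ D_j for all i, j. -/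
open Polynomial

lemma ab_monic (q₀ q₁ q₂ q : ℕ) (m : ℤ) :
    (aPoly q₀ q₂ q m * bPoly q₁ q m).Monic :=
  (monic_prod_of_monic _ _ fun _ _ => monic_X_add_C _).mul
    (monic_prod_of_monic _ _ fun _ _ => monic_X_add_C _)

lemma ab_natDegree (q₀ q₁ q₂ q : ℕ) (m : ℤ) :
    (aPoly q₀ q₂ q m * bPoly q₁ q m).natDegree = (q₀ - 1) + (q₁ - 1) := by
  have ha : (aPoly q₀ q₂ q m).natDegree = q₀ - 1 := by
    rw [aPoly, natDegree_prod _ _ (fun i _ => (monic_X_add_C _).ne_zero),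
      Finset.sum_congr rfl (fun i _ => natDegree_X_add_C _)]
    simp
  have hb : (bPoly q₁ q m).natDegree = q₁ - 1 := by
    rw [bPoly, natDegree_prod _ _ (fun i _ => (monic_X_add_C _).ne_zero),
      Finset.sum_congr rfl (fun i _ => natDegree_X_add_C _)]
    simp
  have hma : (aPoly q₀ q₂ q m).Monic := monic_prod_of_monic _ _ fun _ _ => monic_X_add_C _
  have hmb : (bPoly q₁ q m).Monic := monic_prod_of_monic _ _ fun _ _ => monic_X_add_C _
  rw [hma.natDegree_mul hmb, ha, hb]

lemma GPoly_natDegree (q₀ q₁ q₂ q : ℕ) (m : ℤ) (hq : q ≠ 0) :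
    (GPoly q₀ q₁ q₂ q m).natDegree = (q₀ - 1) + (q₁ - 1) := by
  rw [GPoly, mul_assoc, natDegree_C_mul (by exact_mod_cast hq), ab_natDegree]

lemma GPoly_coeff_dvd (q₀ q₁ q₂ q : ℕ) (m : ℤ) (k : ℕ) :
    (q : ℤ) ∣ (GPoly q₀ q₁ q₂ q m).coeff k := by
  rw [GPoly, mul_assoc, coeff_C_mul]
  exact Dvd.intro _ rfl

lemma GPoly_coeff_top (q₀ q₁ q₂ q : ℕ) (m : ℤ) (hq : q ≠ 0) :
    (GPoly q₀ q₁ q₂ q m).coeff ((q₀ - 1) + (q₁ - 1)) = q := by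
  rw [GPoly, mul_assoc, coeff_C_mul, ← ab_natDegree q₀ q₁ q₂ q m,
    coeff_natDegree, (ab_monic q₀ q₁ q₂ q m).leadingCoeff, mul_one]

lemma key_lemma (q₀ q₁ q₂ q : ℕ) (m : ℤ)
    (hq₀ : Nat.Prime q₀) (hq₁ : Nat.Prime q₁)
    (hq : Nat.Prime q) (hq3 : 3 ≤ q) (hqeq : q = q₀ + q₁ - 1)
    (hm : m ≠ 0) (hqm : ¬ (q : ℤ) ∣ m) (t E : ℤ)
    (hE : (E : ℚ) * (m : ℚ) =
      (F0 q₀ q₁ q₂ q m).eval (((t * m * (Nat.factorial (q - 1) : ℤ)) : ℤ) : ℚ)) :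
    (E : ZMod q) = -(t : ZMod q) := by
  haveI : Fact q.Prime := ⟨hq⟩
  set N : ℤ := (Nat.factorial (q - 1) : ℤ) with hNdef
  have hdeg : (GPoly q₀ q₁ q₂ q m).natDegree = q - 1 := by
    rw [GPoly_natDegree q₀ q₁ q₂ q m hq.ne_zero]
    have := hq₀.two_le; have := hq₁.two_le; omega
  have hdeg1 : (GPoly q₀ q₁ q₂ q m).natDegree + 1 = q := by omega
  -- evaluation as a sum
  have heval : (F0 q₀ q₁ q₂ q m).eval ((t * m * N : ℤ) : ℚ)
      = ∑ k ∈ Finset.range q,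
        (((GPoly q₀ q₁ q₂ q m).coeff k : ℚ) / (k + 1)) * ((t * m * N : ℤ) : ℚ) ^ (k + 1) := by
    rw [F0, hdeg1, eval_finset_sum]
    simp
  -- each summand is m times an integer with known residue
  have hex : ∀ k ∈ Finset.range q, ∃ e : ℤ,
      (((GPoly q₀ q₁ q₂ q m).coeff k : ℚ) / (k + 1)) * ((t * m * N : ℤ) : ℚ) ^ (k + 1)
        = (m : ℚ) * (e : ℚ)
      ∧ (k < q - 1 → (q : ℤ) ∣ e)
      ∧ (k = q - 1 → e = t ^ q * m ^ (q - 1) * N ^ q) := by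
    intro k hk
    have hkq : k < q := Finset.mem_range.mp hk
    set g : ℤ := (GPoly q₀ q₁ q₂ q m).coeff k with hg
    have hk1 : ((k : ℚ) + 1) ≠ 0 := by positivity
    by_cases hke : k = q - 1
    · refine ⟨t ^ q * m ^ (q - 1) * N ^ q, ?_, fun h => absurd hke (by omega), fun _ => rfl⟩
      have hgq : g = q := by
        rw [hg, hke, ← GPoly_coeff_top q₀ q₁ q₂ q m hq.ne_zero]
        congr 1
        have := hq₀.two_le; have := hq₁.two_le; omega
      have hk1q : k + 1 = q := by omega
      have hmq : (m : ℚ) ^ q = (m : ℚ) * (m : ℚ) ^ (q - 1) := by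
        rw [← pow_succ']; congr 1; omega
      have hkq' : ((k : ℚ) + 1) = (q : ℚ) := by exact_mod_cast hk1q
      rw [hgq, hk1q]
      push_cast
      rw [hkq', div_self (by exact_mod_cast hq.pos.ne' : ((q:ℚ)) ≠ 0), one_mul,
        mul_pow, mul_pow, hmq]
      ring
    · have hkle : k + 1 ≤ q - 1 := by omega
      obtain ⟨w, hw⟩ : (k + 1) ∣ Nat.factorial (q - 1) :=
        Nat.dvd_factorial (Nat.succ_pos k) hkle
      have hNw : N = ((k : ℤ) + 1) * (w : ℤ) := by rw [hNdef, hw]; push_cast; ring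
      obtain ⟨c, hc⟩ : (q : ℤ) ∣ g := GPoly_coeff_dvd q₀ q₁ q₂ q m k
      refine ⟨g * w * t ^ (k + 1) * m ^ k * N ^ k, ?_, fun _ => ⟨c * w * t ^ (k + 1) * m ^ k * N ^ k, by rw [hc]; ring⟩, fun h => absurd h hke⟩
      have hint : g * (t * m * N) ^ (k + 1)
          = (m * (g * w * t ^ (k + 1) * m ^ k * N ^ k)) * ((k : ℤ) + 1) := by
        calc g * (t * m * N) ^ (k + 1)
            = g * ((t * m * N) ^ k * (t * m * N)) := by rw [pow_succ]
          _ = g * ((t * m * N) ^ k * (t * m * (((k : ℤ) + 1) * w))) := by rw [← hNw]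
          _ = (m * (g * w * t ^ (k + 1) * m ^ k * N ^ k)) * ((k : ℤ) + 1) := by ring
      have hintq := congrArg (fun z : ℤ => (z : ℚ)) hint
      push_cast at hintq
      rw [div_mul_eq_mul_div, div_eq_iff hk1]
      push_cast
      linear_combination hintq
  choose! e he1 he2 he3 using hex
  have hsum : (F0 q₀ q₁ q₂ q m).eval ((t * m * N : ℤ) : ℚ)
      = (m : ℚ) * ((∑ k ∈ Finset.range q, e k : ℤ) : ℚ) := by
    rw [heval, Finset.sum_congr rfl he1, ← Finset.mul_sum]
    push_cast
    ring
  set E' : ℤ := ∑ k ∈ Finset.range q, e k with hE'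
  have hEE : E = E' := by
    have h1 : (E : ℚ) * (m : ℚ) = (m : ℚ) * (E' : ℚ) := by rw [hE, hsum]
    have hm' : (m : ℚ) ≠ 0 := Int.cast_ne_zero.mpr hm
    have h2 : (E : ℚ) = (E' : ℚ) := mul_right_cancel₀ hm' (by rw [h1]; ring)
    exact_mod_cast h2
  -- split off top term
  have hq1 : q - 1 + 1 = q := by omega
  have hsplit : E' = (∑ k ∈ Finset.range (q - 1), e k) + e (q - 1) := by
    rw [hE', ← Finset.sum_range_succ, hq1]
  have hdvdsum : (q : ℤ) ∣ ∑ k ∈ Finset.range (q - 1), e k :=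
    Finset.dvd_sum fun k hk => he2 k (Finset.mem_range.mpr (by
      have := Finset.mem_range.mp hk; omega)) (Finset.mem_range.mp hk)
  have htop : e (q - 1) = t ^ q * m ^ (q - 1) * N ^ q :=
    he3 (q - 1) (Finset.mem_range.mpr (by omega)) rfl
  have hEmod : (E : ZMod q) = ((t ^ q * m ^ (q - 1) * N ^ q : ℤ) : ZMod q) := by
    rw [hEE, hsplit, Int.cast_add,
      (ZMod.intCast_zmod_eq_zero_iff_dvd _ _).mpr hdvdsum, zero_add, htop]
  rw [hEmod]
  have hmne : ((m : ZMod q)) ≠ 0 := by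
    rw [Ne, ZMod.intCast_zmod_eq_zero_iff_dvd]; exact hqm
  have hN0 : ((N : ZMod q)) = -1 := by
    rw [hNdef]
    push_cast
    exact ZMod.wilsons_lemma q
  push_cast
  rw [ZMod.pow_card, ZMod.pow_card_sub_one_eq_one hmne, hN0, ZMod.pow_card]
  ring

/-- Lemma 3.2: with `Cᵢ = F₀(-i·q₂·m·(q-1)!)/m` and `Dⱼ = F₀(-j·m·(q-1)!)/m`,
we have `Cᵢ ≡ i·q₂ (mod q)`, `Dⱼ ≡ j (mod q)`, and `Cᵢ ≠ Dⱼ` for all `i, j`. -/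
theorem Ci_Dj_distinct (q₀ q₁ q₂ q : ℕ) (m : ℤ)
    (hq₀ : Nat.Prime q₀) (hq₁ : Nat.Prime q₁) (hlt : q₀ < q₁)
    (hq : Nat.Prime q) (hq3 : 3 ≤ q) (hqeq : q = q₀ + q₁ - 1)
    (hm : 1 ≤ m) (hmsf : Squarefree m) (hqm : ¬ (q : ℤ) ∣ m)
    (hq₂ : Nat.Prime q₂) (hcong : (q₂ : ℤ) ≡ -1 [ZMOD (q : ℤ)])
    (Cf Df : ℕ → ℤ)
    (hC : ∀ i ∈ Finset.Icc 1 (q₀ - 1),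
      (Cf i : ℚ) * (m : ℚ) =
        (F0 q₀ q₁ q₂ q m).eval ((-((i : ℤ) * q₂ * m * (Nat.factorial (q - 1) : ℤ)) : ℤ) : ℚ))
    (hD : ∀ j ∈ Finset.Icc 1 (q₁ - 1),
      (Df j : ℚ) * (m : ℚ) =
        (F0 q₀ q₁ q₂ q m).eval ((-((j : ℤ) * m * (Nat.factorial (q - 1) : ℤ)) : ℤ) : ℚ)) :
    ∀ i ∈ Finset.Icc 1 (q₀ - 1), ∀ j ∈ Finset.Icc 1 (q₁ - 1),
      Cf i ≡ (i : ℤ) * q₂ [ZMOD (q : ℤ)] ∧ Df j ≡ (j : ℤ) [ZMOD (q : ℤ)] ∧ Cf i ≠ Df j := by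
  haveI : Fact q.Prime := ⟨hq⟩
  have hm0 : m ≠ 0 := by omega
  intro i hi j hj
  obtain ⟨hi1, hi2⟩ := Finset.mem_Icc.mp hi
  obtain ⟨hj1, hj2⟩ := Finset.mem_Icc.mp hj
  set N : ℤ := (Nat.factorial (q - 1) : ℤ) with hNdef
  have hCi : (Cf i : ZMod q) = ((((i : ℤ) * q₂) : ℤ) : ZMod q) := by
    have hpt : ((-((i : ℤ) * q₂)) * m * N) = -((i : ℤ) * q₂ * m * N) := by ring
    have := key_lemma q₀ q₁ q₂ q m hq₀ hq₁ hq hq3 hqeq hm0 hqm (-((i : ℤ) * q₂)) (Cf i)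
      (by rw [hpt]; exact hC i hi)
    rw [this]; push_cast; ring
  have hDj : (Df j : ZMod q) = (((j : ℤ)) : ZMod q) := by
    have hpt : ((-(j : ℤ)) * m * N) = -((j : ℤ) * m * N) := by ring
    have := key_lemma q₀ q₁ q₂ q m hq₀ hq₁ hq hq3 hqeq hm0 hqm (-(j : ℤ)) (Df j)
      (by rw [hpt]; exact hD j hj)
    rw [this]; push_cast; ring
  refine ⟨(ZMod.intCast_eq_intCast_iff _ _ _).mp hCi,
    (ZMod.intCast_eq_intCast_iff _ _ _).mp hDj, ?_⟩
  intro heq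
  have hq₂' : ((q₂ : ℤ) : ZMod q) = ((-1 : ℤ) : ZMod q) :=
    (ZMod.intCast_eq_intCast_iff _ _ _).mpr hcong
  have h0 : (((i + j : ℕ)) : ZMod q) = 0 := by
    have h1 : (Cf i : ZMod q) = (Df j : ZMod q) := by rw [heq]
    rw [hCi, hDj] at h1
    push_cast at h1 hq₂' ⊢
    rw [hq₂'] at h1
    linear_combination -h1
  have hdvd : q ∣ i + j := (ZMod.natCast_eq_zero_iff _ _).mp h0
  have hle : q ≤ i + j := Nat.le_of_dvd (by omega) hdvd
  have := hq₀.two_le; have := hq₁.two_le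
  omega
end

section
/- With the setup of Theorem 1 and f(x) = ∏_{i=1}^{q₀−1}(q·x^d + C_i) · ∏_{j=1}^{q₁−1}(q·x^d + D_j), for every prime r there exists z coprime to r such that f(z) ≢ 0 (mod r²). -/
open Polynomial

/-!
Put `M = m (q-1)!`. Every root of `G` is a multiple of `M`, so `G = q · Q.scaleRoots M`
with `Q` monic of degree `q - 1`, and integrating term by term gives, for `y = M t`,
`(q-1)! F₀(y) = M^q ((q-1)! t^q + q N)` with `N ∈ ℤ`. Let `e` be one of the `Cᵢ`, `Dⱼ`, so
that `e m = F₀(y)`.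

* `r = q`: Wilson and Fermat turn the identity into `e ≡ -t (mod q)`, so `Cᵢ ≡ -i` and
  `Dⱼ ≡ j`, and no factor of `f(1)` is divisible by `q`.
* `r ≠ q`, `r ∣ M`: `r² (q-1)! ∣ M^q` as `q ≥ 3`, so `r² ∣ m e`, and `r ∣ e` because `m` is
  squarefree; every factor of `f(1)` is then `≡ q ≢ 0 (mod r)`.
* otherwise `q < r` and `r ∤ m`, so `deg f = d (q-1) < r`. If `r² ∣ f(z)` for all units
  `z`, comparing `f(z)` with `f(z + r)` shows `r ∣ f'(z)`, so every nonzero residue is a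
  double root of `f mod r`, which forces `2 (r-1) ≤ deg f`.
-/

open scoped Nat

namespace Polynomial

theorem prod_scaleRoots {R ι : Type*} [CommRing R] [NoZeroDivisors R] (s : Finset ι)
    (p : ι → R[X]) (r : R) :
    (∏ i ∈ s, p i).scaleRoots r = ∏ i ∈ s, (p i).scaleRoots r := by
  classical
  induction s using Finset.induction_on with
  | empty => simp
  | insert a s ha ih =>
    rw [Finset.prod_insert ha, Finset.prod_insert ha, mul_scaleRoots_of_noZeroDivisors, ih]

theorem natDegree_prod_X_add_C {R ι : Type*} [CommRing R] [Nontrivial R] (s : Finset ι)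
    (c : ι → R) : (∏ i ∈ s, (X + C (c i))).natDegree = s.card := by
  simp [natDegree_prod_of_monic _ _ fun _ _ => monic_X_add_C _]

theorem leadingCoeff_C_mul_X_pow_add_C {R : Type*} [Semiring R] {a : R} {d : ℕ} (ha : a ≠ 0)
    (hd : 0 < d) (c : R) : (C a * X ^ d + C c).leadingCoeff = a := by
  rw [leadingCoeff_add_of_degree_lt', leadingCoeff_C_mul_X_pow]
  rw [degree_C_mul_X_pow d ha]
  exact degree_C_le.trans_lt (by exact_mod_cast hd)

section CMulXPowAddC

variable {R ι : Type*} [CommRing R] [IsDomain R] {a : R} {d : ℕ}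

theorem leadingCoeff_prod_C_mul_X_pow_add_C (ha : a ≠ 0) (hd : 0 < d) (s : Finset ι)
    (c : ι → R) : (∏ i ∈ s, (C a * X ^ d + C (c i))).leadingCoeff = a ^ s.card := by
  simp [leadingCoeff_prod, leadingCoeff_C_mul_X_pow_add_C ha hd]

theorem natDegree_prod_C_mul_X_pow_add_C (ha : a ≠ 0) (hd : 0 < d) (s : Finset ι)
    (c : ι → R) : (∏ i ∈ s, (C a * X ^ d + C (c i))).natDegree = d * s.card := by
  rw [natDegree_prod _ _ fun i _ h => ha (by
      rw [← leadingCoeff_C_mul_X_pow_add_C ha hd (c i), h, leadingCoeff_zero]),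
    Finset.sum_congr rfl fun i _ => by rw [natDegree_add_C, natDegree_C_mul_X_pow d a ha],
    Finset.sum_const, smul_eq_mul, mul_comm]

end CMulXPowAddC

end Polynomial

theorem dvd_eval_derivative_of_sq_dvd_eval {f : ℤ[X]} {p z : ℤ} (hp : p ≠ 0)
    (hz : p ^ 2 ∣ f.eval z) (hzp : p ^ 2 ∣ f.eval (z + p)) : p ∣ f.derivative.eval z := by
  obtain ⟨k, hk⟩ := f.binomExpansion z p
  have : p ^ 2 ∣ f.derivative.eval z * p := by
    have := dvd_sub (dvd_sub hzp hz) (dvd_mul_left (p ^ 2) k)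
    rwa [hk, show f.eval z + f.derivative.eval z * p + k * p ^ 2 - f.eval z - k * p ^ 2
      = f.derivative.eval z * p by ring] at this
  rwa [sq, mul_dvd_mul_iff_right hp] at this

theorem exists_isCoprime_not_sq_dvd_eval {f : ℤ[X]} {p : ℕ} (hp : p.Prime)
    (hlc : ¬ (p : ℤ) ∣ f.leadingCoeff) (hdeg : f.natDegree < 2 * (p - 1)) :
    ∃ z : ℤ, IsCoprime z p ∧ ¬ (p : ℤ) ^ 2 ∣ f.eval z := by
  have := Fact.mk hp
  by_contra! h
  have hlc' : (Int.castRingHom (ZMod p)) f.leadingCoeff ≠ 0 :=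
    mt (ZMod.intCast_zmod_eq_zero_iff_dvd _ p).mp hlc
  set F := f.map (Int.castRingHom (ZMod p)) with hF
  have hF0 : F ≠ 0 := fun h0 => hlc' <| by
    rw [← leadingCoeff_map_of_leadingCoeff_ne_zero _ hlc', ← hF, h0, leadingCoeff_zero]
  have hroot : ∀ (g : ℤ[X]) (z : ℤ), (p : ℤ) ∣ g.eval z →
      (g.map (Int.castRingHom (ZMod p))).IsRoot z := fun g z hg => by
    rw [IsRoot, eval_intCast_map]
    exact (ZMod.intCast_zmod_eq_zero_iff_dvd _ p).mpr hg
  have hmult : ∀ u : ZMod p, u ≠ 0 → 2 ≤ F.roots.count u := by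
    intro u hu
    obtain ⟨z, rfl⟩ := ZMod.intCast_surjective u
    have hcop : ∀ n : ℤ, IsCoprime (z + n * p) p := fun n =>
      ((Nat.prime_iff_prime_int.mp hp).irreducible.coprime_iff_not_dvd.mpr
        (mt (ZMod.intCast_zmod_eq_zero_iff_dvd _ p).mpr hu)).symm.add_mul_right_left n
    have h0 := h z (by simpa using hcop 0)
    have hder := dvd_eval_derivative_of_sq_dvd_eval (by exact_mod_cast hp.ne_zero) h0
      (h _ (by simpa using hcop 1))
    rw [count_roots, Nat.succ_le_iff, one_lt_rootMultiplicity_iff_isRoot hF0, hF,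
      derivative_map]
    exact ⟨hroot f z (dvd_trans (dvd_pow_self _ two_ne_zero) h0), hroot _ z hder⟩
  have : 2 * (p - 1) ≤ F.natDegree := calc
    2 * (p - 1) = ∑ _u ∈ Finset.univ.erase (0 : ZMod p), 2 := by
      simp [Finset.card_erase_of_mem, mul_comm]
    _ ≤ ∑ u ∈ Finset.univ.erase (0 : ZMod p), F.roots.count u :=
      Finset.sum_le_sum fun u hu => hmult u (Finset.ne_of_mem_erase hu)
    _ ≤ ∑ u, F.roots.count u := Finset.sum_le_sum_of_subset (Finset.erase_subset _ _)
    _ = Multiset.card F.roots := Multiset.sum_count_eq_card fun u _ => Finset.mem_univ u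
    _ ≤ F.natDegree := card_roots' F
  rw [hF, natDegree_map_of_leadingCoeff_ne_zero _ hlc'] at this
  omega

theorem aPoly_eq_scaleRoots (q₀ q₂ q : ℕ) (m : ℤ) :
    aPoly q₀ q₂ q m =
      (∏ i ∈ Finset.Icc 1 (q₀ - 1), (X + C ((i : ℤ) * q₂))).scaleRoots (m * (q - 1)!) := by
  simp only [aPoly, prod_scaleRoots, X_add_C_scaleRoots, mul_assoc]

theorem bPoly_eq_scaleRoots (q₁ q : ℕ) (m : ℤ) :
    bPoly q₁ q m =
      (∏ j ∈ Finset.Icc 1 (q₁ - 1), (X + C (j : ℤ))).scaleRoots (m * (q - 1)!) := by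
  simp only [bPoly, prod_scaleRoots, X_add_C_scaleRoots, mul_assoc]

theorem GPoly_eq_C_mul_scaleRoots (q₀ q₁ q₂ q : ℕ) (m : ℤ) :
    GPoly q₀ q₁ q₂ q m = C (q : ℤ) *
      ((∏ i ∈ Finset.Icc 1 (q₀ - 1), (X + C ((i : ℤ) * q₂))) *
        ∏ j ∈ Finset.Icc 1 (q₁ - 1), (X + C (j : ℤ))).scaleRoots (m * (q - 1)!) := by
  rw [GPoly, aPoly_eq_scaleRoots, bPoly_eq_scaleRoots, mul_scaleRoots_of_noZeroDivisors,
    mul_assoc]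

section IntegralOfG

variable {q₀ q₁ q₂ q : ℕ} {m e : ℤ}

theorem factorial_mul_eval_F0 {Q : ℤ[X]} (hq : q ≠ 0) (hQ : Q.Monic)
    (hQdeg : Q.natDegree = q - 1)
    (hG : GPoly q₀ q₁ q₂ q m = C (q : ℤ) * Q.scaleRoots (m * (q - 1)!)) (t : ℤ) :
    ∃ N : ℤ, ((q - 1)! : ℚ) * (F0 q₀ q₁ q₂ q m).eval ((m * (q - 1)! * t : ℤ) : ℚ) =
      (((m * (q - 1)!) ^ q * ((q - 1)! * t ^ q + q * N) : ℤ) : ℚ) := by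
  set M : ℤ := m * (q - 1)!
  have hGdeg : (GPoly q₀ q₁ q₂ q m).natDegree = q - 1 := by
    rw [hG, natDegree_C_mul (by exact_mod_cast hq), natDegree_scaleRoots, hQdeg]
  have hGcoeff : ∀ k, (GPoly q₀ q₁ q₂ q m).coeff k = q * (Q.coeff k * M ^ (q - 1 - k)) := by
    intro k
    rw [hG, coeff_C_mul, coeff_scaleRoots, hQdeg]
  refine ⟨∑ k ∈ Finset.range (q - 1),
    Q.coeff k * t ^ (k + 1) * (((q - 1)! / (k + 1) : ℕ) : ℤ), ?_⟩
  have hterm : ∀ k ∈ Finset.range (q - 1), ((q - 1)! : ℚ) *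
      (C (((GPoly q₀ q₁ q₂ q m).coeff k : ℚ) / (k + 1)) * X ^ (k + 1)).eval
        ((M * t : ℤ) : ℚ) =
      ((M ^ q * (q * (Q.coeff k * t ^ (k + 1) * (((q - 1)! / (k + 1) : ℕ) : ℤ))) : ℤ) :
        ℚ) := by
    intro k hk
    have hk : k + 1 ≤ q - 1 := Finset.mem_range.mp hk
    have hpow : (M : ℚ) ^ q = M ^ (q - 1 - k) * M ^ (k + 1) := by
      rw [← pow_add]; congr 1; omega
    simp only [eval_mul, eval_C, eval_pow, eval_X, hGcoeff, Int.cast_mul, Int.cast_pow,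
      Int.cast_natCast]
    rw [Nat.cast_div (Nat.dvd_factorial k.succ_pos hk) (by positivity), hpow]
    push_cast
    field_simp
    ring
  have htop : ((q - 1)! : ℚ) *
      (C (((GPoly q₀ q₁ q₂ q m).coeff (q - 1) : ℚ) / ((q - 1 : ℕ) + 1)) * X ^ q).eval
        ((M * t : ℤ) : ℚ) = ((M ^ q * ((q - 1)! * t ^ q) : ℤ) : ℚ) := by
    have hq1 : ((q - 1 : ℕ) : ℚ) + 1 = q := by exact_mod_cast Nat.sub_add_cancel (by omega)
    have hq' : (q : ℚ) ≠ 0 := by exact_mod_cast hq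
    rw [hGcoeff, ← hQdeg, hQ.coeff_natDegree, hQdeg, Nat.sub_self, hq1]
    simp only [eval_mul, eval_C, eval_pow, eval_X]
    push_cast
    field_simp
    ring
  rw [F0, hGdeg, Finset.sum_range_succ, eval_add, mul_add, eval_finsetSum, Finset.mul_sum,
    Finset.sum_congr rfl hterm, ← Int.cast_sum, show q - 1 + 1 = q by omega, htop,
    ← Int.cast_add, mul_add (M ^ q), Finset.mul_sum, Finset.mul_sum, add_comm]

theorem exists_factorial_mul_eq_of_eval_F0 (h₀ : 1 ≤ q₀) (h₁ : 1 ≤ q₁)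
    (hqeq : q = q₀ + q₁ - 1) {t : ℤ}
    (he : (e : ℚ) * m = (F0 q₀ q₁ q₂ q m).eval ((m * (q - 1)! * t : ℤ) : ℚ)) :
    ∃ N : ℤ, (q - 1)! * (e * m) = (m * (q - 1)!) ^ q * ((q - 1)! * t ^ q + q * N) := by
  have hA := monic_prod_of_monic (Finset.Icc 1 (q₀ - 1)) (fun i => X + C ((i : ℤ) * q₂))
    fun _ _ => monic_X_add_C _
  have hB := monic_prod_of_monic (Finset.Icc 1 (q₁ - 1)) (fun j => X + C (j : ℤ))
    fun _ _ => monic_X_add_C _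
  obtain ⟨N, hN⟩ := factorial_mul_eval_F0 (by omega) (hA.mul hB)
    (by rw [hA.natDegree_mul hB, natDegree_prod_X_add_C, natDegree_prod_X_add_C]; simp; omega)
    (GPoly_eq_C_mul_scaleRoots q₀ q₁ q₂ q m) t
  refine ⟨N, ?_⟩
  rw [← he] at hN
  exact_mod_cast hN

theorem dvd_of_eval_F0 (hmsf : Squarefree m) (h₀ : 1 ≤ q₀) (h₁ : 1 ≤ q₁)
    (hqeq : q = q₀ + q₁ - 1) (hq3 : 3 ≤ q) {r y : ℤ} (hr : Prime r)
    (hrM : r ∣ m * (q - 1)!) (hy : m * (q - 1)! ∣ y)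
    (he : (e : ℚ) * m = (F0 q₀ q₁ q₂ q m).eval (y : ℚ)) : r ∣ e := by
  obtain ⟨t, rfl⟩ := hy
  obtain ⟨N, hN⟩ := exists_factorial_mul_eq_of_eval_F0 h₀ h₁ hqeq he
  have hpow : r ^ 2 * (q - 1)! ∣ (m * (q - 1)!) ^ q := by
    rw [show (m * (q - 1)! : ℤ) ^ q = (m * (q - 1)!) ^ 2 * (m * (q - 1)!) ^ (q - 2) by
      rw [← pow_add]; congr 1; omega]
    exact mul_dvd_mul (pow_dvd_pow_of_dvd hrM 2)
      ((dvd_mul_left _ _).trans (dvd_pow_self _ (by omega)))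
  have hsq : r ^ 2 ∣ m * e := by
    rw [← mul_dvd_mul_iff_right (by positivity : ((q - 1)! : ℤ) ≠ 0), mul_comm m e,
      mul_comm (e * m), hN]
    exact hpow.mul_right _
  exact (prime_pow_succ_dvd_mul hr hsq).resolve_left
    fun h => hr.not_isUnit (hmsf r (by rwa [← sq]))

theorem not_dvd_add_of_eval_F0 (hq : q.Prime) (hqm : ¬ (q : ℤ) ∣ m) (h₀ : 1 ≤ q₀)
    (h₁ : 1 ≤ q₁) (hqeq : q = q₀ + q₁ - 1) {t y : ℤ} (ht : ¬ (q : ℤ) ∣ t)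
    (hy : y = m * (q - 1)! * t) (he : (e : ℚ) * m = (F0 q₀ q₁ q₂ q m).eval (y : ℚ)) :
    ¬ (q : ℤ) ∣ q + e := by
  subst hy
  obtain ⟨N, hN⟩ := exists_factorial_mul_eq_of_eval_F0 h₀ h₁ hqeq he
  have := Fact.mk hq
  have hmod := congrArg (Int.cast : ℤ → ZMod q) hN
  push_cast at hmod
  rw [ZMod.wilsons_lemma, ZMod.natCast_self, ZMod.pow_card, ZMod.pow_card] at hmod
  rw [← ZMod.intCast_zmod_eq_zero_iff_dvd] at ht hqm ⊢
  push_cast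
  rw [ZMod.natCast_self, zero_add]
  intro he0
  simp [he0, hqm, ht] at hmod

end IntegralOfG

section ProdCMulXPowAddC

variable {ι : Type*} {a : ℤ} {d : ℕ} {s t : Finset ι} {c c' : ι → ℤ}

theorem not_sq_dvd_eval_one_prod_mul_prod {r : ℤ} (hr : Prime r)
    (hc : ∀ i ∈ s, ¬ r ∣ a + c i) (hc' : ∀ j ∈ t, ¬ r ∣ a + c' j) :
    ¬ r ^ 2 ∣
      ((∏ i ∈ s, (C a * X ^ d + C (c i))) * ∏ j ∈ t, (C a * X ^ d + C (c' j))).eval 1 := by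
  refine mt (dvd_trans (dvd_pow_self r two_ne_zero)) ?_
  simp only [eval_mul, eval_prod, eval_add, eval_C, eval_pow, eval_X, one_pow, mul_one]
  rw [hr.dvd_mul, hr.dvd_finsetProd_iff, hr.dvd_finsetProd_iff]
  rintro (⟨i, hi, h⟩ | ⟨j, hj, h⟩)
  exacts [hc i hi h, hc' j hj h]

theorem exists_isCoprime_not_sq_dvd_eval_prod_mul_prod {p : ℕ} (hp : p.Prime)
    (ha : ¬ (p : ℤ) ∣ a) (hd : 0 < d) (hdeg : d * (s.card + t.card) < p) :
    ∃ z : ℤ, IsCoprime z p ∧ ¬ (p : ℤ) ^ 2 ∣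
      ((∏ i ∈ s, (C a * X ^ d + C (c i))) * ∏ j ∈ t, (C a * X ^ d + C (c' j))).eval z := by
  have ha0 : a ≠ 0 := by rintro rfl; exact ha (dvd_zero _)
  have hlc : ((∏ i ∈ s, (C a * X ^ d + C (c i))) *
      ∏ j ∈ t, (C a * X ^ d + C (c' j))).leadingCoeff = a ^ (s.card + t.card) := by
    rw [leadingCoeff_mul, leadingCoeff_prod_C_mul_X_pow_add_C ha0 hd,
      leadingCoeff_prod_C_mul_X_pow_add_C ha0 hd, pow_add]
  refine exists_isCoprime_not_sq_dvd_eval hp ?_ ?_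
  · rw [hlc]
    exact fun h => ha ((Nat.prime_iff_prime_int.mp hp).dvd_of_dvd_pow h)
  · rw [natDegree_mul' (by rw [← leadingCoeff_mul, hlc]; exact pow_ne_zero _ ha0),
      natDegree_prod_C_mul_X_pow_add_C ha0 hd, natDegree_prod_C_mul_X_pow_add_C ha0 hd,
      ← mul_add]
    have := hp.two_le
    omega

end ProdCMulXPowAddC

theorem exists_unit_nonroot_mod_sq_general (q₀ q₁ q₂ q : ℕ) (m : ℤ)
    (hq₀ : Nat.Prime q₀) (hq₁ : Nat.Prime q₁)
    (hq : Nat.Prime q) (hqeq : q = q₀ + q₁ - 1)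
    (hmsf : Squarefree m) (hqm : ¬ (q : ℤ) ∣ m)
    (hcong : (q₂ : ℤ) ≡ -1 [ZMOD (q : ℤ)])
    (d : ℕ) (hd : 1 ≤ d)
    (Cf Df : ℕ → ℤ)
    (hC : ∀ i ∈ Finset.Icc 1 (q₀ - 1),
      (Cf i : ℚ) * (m : ℚ) =
        (F0 q₀ q₁ q₂ q m).eval ((-((i : ℤ) * q₂ * m * (Nat.factorial (q - 1) : ℤ)) : ℤ) : ℚ))
    (hD : ∀ j ∈ Finset.Icc 1 (q₁ - 1),
      (Df j : ℚ) * (m : ℚ) =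
        (F0 q₀ q₁ q₂ q m).eval ((-((j : ℤ) * m * (Nat.factorial (q - 1) : ℤ)) : ℤ) : ℚ))
    (hrm : ∀ r : ℕ, Nat.Prime r → q < r → r < d * (q - 1) + 1 → (r : ℤ) ∣ m) :
    ∀ r : ℕ, Nat.Prime r → ∃ z : ℤ, IsCoprime z (r : ℤ) ∧
      ¬ ((r : ℤ) ^ 2 ∣
        ((∏ i ∈ Finset.Icc 1 (q₀ - 1), (C (q : ℤ) * X ^ d + C (Cf i))) *
          ∏ j ∈ Finset.Icc 1 (q₁ - 1), (C (q : ℤ) * X ^ d + C (Df j))).eval z) := by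
  intro r hr
  have h₀ := hq₀.two_le
  have h₁ := hq₁.two_le
  have hr' := Nat.prime_iff_prime_int.mp hr
  have hCy (i : ℕ) : -((i : ℤ) * q₂ * m * (q - 1)!) = m * (q - 1)! * -(i * q₂) := by ring
  have hDy (j : ℕ) : -((j : ℤ) * m * (q - 1)!) = m * (q - 1)! * -j := by ring
  by_cases hrq : r = q
  · subst hrq
    have hn (n : ℕ) (h0 : 0 < n) (hlt : n < r) : ¬ (r : ℤ) ∣ n := fun h =>
      Nat.not_dvd_of_pos_of_lt h0 hlt (Int.natCast_dvd_natCast.mp h)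
    have hrq₂ : ¬ (r : ℤ) ∣ q₂ := fun h => hr'.not_isUnit
      (isUnit_of_dvd_one (dvd_neg.mp (by simpa using dvd_add hcong.dvd h)))
    refine ⟨1, isCoprime_one_left,
      not_sq_dvd_eval_one_prod_mul_prod hr' (fun i hi => ?_) fun j hj => ?_⟩
    · obtain ⟨hi1, hi2⟩ := Finset.mem_Icc.mp hi
      refine not_dvd_add_of_eval_F0 hq hqm (by omega) (by omega) hqeq ?_ (hCy i) (hC i hi)
      rw [dvd_neg, hr'.dvd_mul]
      exact not_or.mpr ⟨hn i (by omega) (by omega), hrq₂⟩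
    · obtain ⟨hj1, hj2⟩ := Finset.mem_Icc.mp hj
      exact not_dvd_add_of_eval_F0 hq hqm (by omega) (by omega) hqeq
        (by rw [dvd_neg]; exact hn j (by omega) (by omega)) (hDy j) (hD j hj)
  have hrq' : ¬ (r : ℤ) ∣ q := fun h =>
    hrq ((Nat.prime_dvd_prime_iff_eq hr hq).mp (Int.natCast_dvd_natCast.mp h))
  by_cases hrM : (r : ℤ) ∣ m * (q - 1)!
  · refine ⟨1, isCoprime_one_left,
      not_sq_dvd_eval_one_prod_mul_prod hr' (fun i hi => ?_) fun j hj => ?_⟩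
    · refine (dvd_add_left ?_).not.mpr hrq'
      exact dvd_of_eval_F0 hmsf (by omega) (by omega) hqeq (by omega) hr' hrM ⟨_, hCy i⟩
        (hC i hi)
    · refine (dvd_add_left ?_).not.mpr hrq'
      exact dvd_of_eval_F0 hmsf (by omega) (by omega) hqeq (by omega) hr' hrM ⟨_, hDy j⟩
        (hD j hj)
  have hqr : q < r := by
    by_contra h
    exact hrM ((Int.natCast_dvd_natCast.mpr (Nat.dvd_factorial hr.pos (by omega))).mul_left m)
  have hdr : d * (q - 1) < r := by
    by_contra h
    exact hrM ((hrm r hr hqr (by omega)).mul_right _)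
  refine exists_isCoprime_not_sq_dvd_eval_prod_mul_prod hr hrq' hd ?_
  rwa [Nat.card_Icc, Nat.card_Icc, show q₀ - 1 + 1 - 1 + (q₁ - 1 + 1 - 1) = q - 1 by omega]

/-- For `f(x) = ∏ᵢ (q·x^d + Cᵢ) · ∏ⱼ (q·x^d + Dⱼ)`, for every prime `r` there is a `z`
coprime to `r` with `f(z) ≢ 0 (mod r²)`. -/
theorem exists_unit_nonroot_mod_sq (q₀ q₁ q₂ q : ℕ) (m : ℤ)
    (hq₀ : Nat.Prime q₀) (hq₁ : Nat.Prime q₁) (hlt : q₀ < q₁)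
    (hq : Nat.Prime q) (hq3 : 3 ≤ q) (hqeq : q = q₀ + q₁ - 1)
    (hm : 1 ≤ m) (hmsf : Squarefree m) (hqm : ¬ (q : ℤ) ∣ m)
    (hq₂ : Nat.Prime q₂) (hcong : (q₂ : ℤ) ≡ -1 [ZMOD (q : ℤ)])
    (d : ℕ) (hd : 1 ≤ d)
    (Cf Df : ℕ → ℤ)
    (hC : ∀ i ∈ Finset.Icc 1 (q₀ - 1),
      (Cf i : ℚ) * (m : ℚ) =
        (F0 q₀ q₁ q₂ q m).eval ((-((i : ℤ) * q₂ * m * (Nat.factorial (q - 1) : ℤ)) : ℤ) : ℚ))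
    (hD : ∀ j ∈ Finset.Icc 1 (q₁ - 1),
      (Df j : ℚ) * (m : ℚ) =
        (F0 q₀ q₁ q₂ q m).eval ((-((j : ℤ) * m * (Nat.factorial (q - 1) : ℤ)) : ℤ) : ℚ))
    (hrm : ∀ r : ℕ, Nat.Prime r → q < r → r < d * (q - 1) + 1 → (r : ℤ) ∣ m) :
    ∀ r : ℕ, Nat.Prime r → ∃ z : ℤ, IsCoprime z (r : ℤ) ∧
      ¬ ((r : ℤ) ^ 2 ∣
        ((∏ i ∈ Finset.Icc 1 (q₀ - 1), (C (q : ℤ) * X ^ d + C (Cf i))) *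
          ∏ j ∈ Finset.Icc 1 (q₁ - 1), (C (q : ℤ) * X ^ d + C (Df j))).eval z) :=
  exists_unit_nonroot_mod_sq_general q₀ q₁ q₂ q m hq₀ hq₁ hq hqeq hmsf hqm hcong d hd Cf Df hC hD
    hrm
end

section
/- With the setup of Theorem 1, let p be a prime with p > m such that f(p) is squarefree, where f(x) = ∏_{i=1}^{q₀−1}(q·x^d + C_i) · ∏_{j=1}^{q₁−1}(q·x^d + D_j). Then gcd(q·m, q·p^d + C_i) = 1 and gcd(q·m, q·p^d + D_j) = 1 for all i, j. -/
open Polynomial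

/-!
Put `c = m·(q-1)!`. Then `a·b` is a monic integer polynomial `Q` of degree `q-1` with its roots
scaled by `c`, so at `x = -s·c` the `k`-th term of `F₀(x) = ∑ G_k x^(k+1)/(k+1)` is
`q·Q_k·(-s)^(k+1)·c^q/(k+1)`. Since `(k+1) ∣ (q-1)!` for `k < q-1`, all but the top term lie in
`q·m^q·ℤ`, and the top term is `m^q·(-s·(q-1)!)^q ≡ m^q·s (mod q)` by Fermat and Wilson.
Hence `Cᵢ = m^(q-1)·R` with `R ≡ s ≢ 0 (mod q)` (here `s = i·q₂ ≡ -i` or `s = j`), so `m ∣ Cᵢ`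
and `q ∤ Cᵢ`; since `m` is prime to `q` and to `p > m`, `q·m` is prime to `q·p^d + Cᵢ`.
-/

open scoped Nat

noncomputable def antideriv (P : ℤ[X]) : ℚ[X] :=
  ∑ k ∈ Finset.range (P.natDegree + 1), C ((P.coeff k : ℚ) / (k + 1)) * X ^ (k + 1)

lemma prod_X_add_C_mul_eq_scaleRoots {ι R : Type*} [CommRing R] [NoZeroDivisors R]
    (s : Finset ι) (a : ι → R) (c : R) :
    ∏ i ∈ s, (X + C (a i * c)) = (∏ i ∈ s, (X + C (a i))).scaleRoots c := by
  classical
  induction s using Finset.induction with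
  | empty => simp [one_scaleRoots]
  | insert j t hj ih =>
    rw [Finset.prod_insert hj, Finset.prod_insert hj, mul_scaleRoots_of_noZeroDivisors,
      X_add_C_scaleRoots, ih]

/-- `a · b` with the factor `m·(q-1)!` removed from its roots (see `GPoly_eq_scaleRoots`). -/
noncomputable def abRoots (q₀ q₁ q₂ : ℕ) : ℤ[X] :=
  (∏ i ∈ Finset.Icc 1 (q₀ - 1), (X + C ((i : ℤ) * q₂))) *
    ∏ j ∈ Finset.Icc 1 (q₁ - 1), (X + C (j : ℤ))

lemma monic_abRoots (q₀ q₁ q₂ : ℕ) : (abRoots q₀ q₁ q₂).Monic :=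
  (monic_prod_of_monic _ _ fun _ _ => monic_X_add_C _).mul
    (monic_prod_of_monic _ _ fun _ _ => monic_X_add_C _)

lemma natDegree_abRoots (q₀ q₁ q₂ : ℕ) : (abRoots q₀ q₁ q₂).natDegree = q₀ - 1 + (q₁ - 1) := by
  rw [abRoots, natDegree_mul (monic_prod_of_monic _ _ fun _ _ => monic_X_add_C _).ne_zero
      (monic_prod_of_monic _ _ fun _ _ => monic_X_add_C _).ne_zero,
    natDegree_prod_of_monic _ _ fun _ _ => monic_X_add_C _,
    natDegree_prod_of_monic _ _ fun _ _ => monic_X_add_C _]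
  simp only [natDegree_X_add_C, Finset.sum_const, Nat.card_Icc, smul_eq_mul, mul_one,
    Nat.add_sub_cancel]

lemma GPoly_eq_scaleRoots (q₀ q₁ q₂ q : ℕ) (m : ℤ) :
    GPoly q₀ q₁ q₂ q m = C (q : ℤ) * (abRoots q₀ q₁ q₂).scaleRoots (m * (q - 1)!) := by
  rw [GPoly, mul_assoc, abRoots, mul_scaleRoots_of_noZeroDivisors, aPoly, bPoly,
    ← prod_X_add_C_mul_eq_scaleRoots, ← prod_X_add_C_mul_eq_scaleRoots]
  simp only [mul_assoc]

lemma eval_antideriv_scaleRoots {Q : ℤ[X]} (hQ : Q.Monic) (m s : ℤ) :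
    ∃ Z : ℤ,
      (antideriv (C ((Q.natDegree + 1 : ℕ) : ℤ) * Q.scaleRoots (m * Q.natDegree !))).eval
          ((-(s * m * Q.natDegree !) : ℤ) : ℚ) =
        ((m ^ (Q.natDegree + 1) *
          ((-(s * Q.natDegree !)) ^ (Q.natDegree + 1) + (Q.natDegree + 1 : ℕ) * Z) : ℤ) : ℚ) := by
  set n := Q.natDegree with hn
  set F : ℤ := ((n ! : ℕ) : ℤ)
  set N : ℤ := ((n + 1 : ℕ) : ℤ)
  refine ⟨∑ k ∈ Finset.range n, Q.coeff k * (-s) ^ (k + 1) * F ^ n * (F / ((k + 1 : ℕ) : ℤ)), ?_⟩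
  have hdeg : (C N * Q.scaleRoots (m * F)).natDegree = n := by
    rw [natDegree_C_mul (by positivity), natDegree_scaleRoots]
  have htop : ((N * (Q.coeff n * (m * F) ^ (n - n)) : ℤ) : ℚ) / (n + 1) *
      ((-(s * m * F) : ℤ) : ℚ) ^ (n + 1) = ((m ^ (n + 1) * (-(s * F)) ^ (n + 1) : ℤ) : ℚ) := by
    rw [hQ.coeff_natDegree, Nat.sub_self]
    push_cast [N]
    field_simp
    ring
  have hterm : ∀ k ∈ Finset.range n,
      ((N * (Q.coeff k * (m * F) ^ (n - k)) : ℤ) : ℚ) / (k + 1) *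
          ((-(s * m * F) : ℤ) : ℚ) ^ (k + 1) =
        ((m ^ (n + 1) * (N * (Q.coeff k * (-s) ^ (k + 1) * F ^ n * (F / ((k + 1 : ℕ) : ℤ)))) :
          ℤ) : ℚ) := by
    intro k hk
    obtain ⟨j, hj⟩ : ∃ j, n = k + j := ⟨n - k, by simp at hk; omega⟩
    obtain ⟨t, ht⟩ : ((k + 1 : ℕ) : ℤ) ∣ F :=
      Int.natCast_dvd_natCast.mpr (Nat.dvd_factorial k.succ_pos (by simp at hk; omega))
    have hint : N * (Q.coeff k * (m * F) ^ (n - k)) * (-(s * m * F)) ^ (k + 1) =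
        m ^ (n + 1) * (N * (Q.coeff k * (-s) ^ (k + 1) * F ^ n * t)) * ((k + 1 : ℕ) : ℤ) := by
      rw [show n - k = j by omega, hj]
      linear_combination (N * Q.coeff k * m ^ (k + j + 1) * (-s) ^ (k + 1) * F ^ (k + j)) * ht
    have hdiv : F / ((k + 1 : ℕ) : ℤ) = t := by
      rw [ht, Int.mul_ediv_cancel_left _ (by positivity)]
    rw [hdiv, div_mul_eq_mul_div, div_eq_iff (by positivity)]
    exact_mod_cast hint
  rw [antideriv, hdeg, eval_finsetSum, Finset.sum_range_succ]
  simp only [eval_mul, eval_C, eval_pow, eval_X, coeff_C_mul, coeff_scaleRoots, ← hn]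
  rw [Finset.sum_congr rfl hterm, htop, ← Int.cast_sum, ← Int.cast_add, ← Finset.mul_sum,
    ← Finset.mul_sum]
  congr 1
  ring

lemma eval_F0_neg_mul {q₀ q₁ q : ℕ} (q₂ : ℕ) (m : ℤ) (hn : q₀ - 1 + (q₁ - 1) + 1 = q) (s : ℤ) :
    ∃ Z : ℤ, (F0 q₀ q₁ q₂ q m).eval ((-(s * m * (q - 1)!) : ℤ) : ℚ) =
      ((m ^ q * ((-(s * (q - 1)!)) ^ q + q * Z) : ℤ) : ℚ) := by
  subst hn
  have h := eval_antideriv_scaleRoots (monic_abRoots q₀ q₁ q₂) m s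
  rw [natDegree_abRoots] at h
  rwa [F0, GPoly_eq_scaleRoots, Nat.add_sub_cancel]

lemma intCast_neg_mul_factorial_pow {q : ℕ} (hq : q.Prime) (s : ℤ) :
    (((-(s * (q - 1)!)) ^ q : ℤ) : ZMod q) = s := by
  have := Fact.mk hq
  push_cast
  rw [ZMod.pow_card, ZMod.wilsons_lemma]
  ring

lemma isCoprime_mul_mul_add {q m x c : ℤ} (hq : Prime q) (hqc : ¬ q ∣ c) (hmc : m ∣ c)
    (hmx : IsCoprime m (q * x)) : IsCoprime (q * m) (q * x + c) := by
  obtain ⟨w, rfl⟩ := hmc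
  refine IsCoprime.mul_left ?_ (hmx.add_mul_left_right w)
  rw [hq.coprime_iff_not_dvd]
  exact fun h => hqc ((dvd_add_right (dvd_mul_right q x)).mp h)

lemma isCoprime_of_mul_eq_eval_F0 {q₀ q₁ q₂ q : ℕ} {m : ℤ} (hq : q.Prime)
    (hn : q₀ - 1 + (q₁ - 1) + 1 = q) (hm : 1 ≤ m) (hqm : ¬ (q : ℤ) ∣ m) {s c : ℤ}
    (hs : ¬ (q : ℤ) ∣ s)
    (hc : (c : ℚ) * m = (F0 q₀ q₁ q₂ q m).eval ((-(s * m * (q - 1)!) : ℤ) : ℚ))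
    {p : ℕ} (hp : p.Prime) (hpm : m < p) (d : ℕ) :
    IsCoprime ((q : ℤ) * m) (q * p ^ d + c) := by
  obtain ⟨Z, hZ⟩ := eval_F0_neg_mul q₂ m hn s
  set R := (-(s * (q - 1)!)) ^ q + q * Z
  have hc' : c = m ^ (q - 1) * R := by
    have h : c * m = m ^ (q - 1) * R * m := by
      rw [mul_right_comm, ← pow_succ, Nat.sub_add_cancel hq.one_le]
      exact_mod_cast hc.trans hZ
    exact mul_right_cancel₀ (by omega) h
  have hqc : ¬ (q : ℤ) ∣ c := by
    have := Fact.mk hq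
    have hmq : ((m : ℤ) : ZMod q) ≠ 0 := by rwa [Ne, ZMod.intCast_zmod_eq_zero_iff_dvd]
    rwa [← ZMod.intCast_zmod_eq_zero_iff_dvd, hc', Int.cast_mul, Int.cast_pow,
      ZMod.pow_card_sub_one_eq_one hmq, one_mul, Int.cast_add, intCast_neg_mul_factorial_pow hq,
      Int.cast_mul, Int.cast_natCast, ZMod.natCast_self, zero_mul, add_zero,
      ZMod.intCast_zmod_eq_zero_iff_dvd]
  have hpm' : ¬ (p : ℤ) ∣ m := fun h => (Int.le_of_dvd (by omega) h).not_gt hpm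
  have hmqp : IsCoprime m (q * p ^ d) :=
    ((Nat.prime_iff_prime_int.mp hq).coprime_iff_not_dvd.mpr hqm).symm.mul_right
      ((Nat.prime_iff_prime_int.mp hp).coprime_iff_not_dvd.mpr hpm').symm.pow_right
  exact isCoprime_mul_mul_add (Nat.prime_iff_prime_int.mp hq) hqc
    (hc' ▸ dvd_mul_of_dvd_left (dvd_pow_self m (by have := hq.two_le; omega)) R) hmqp

theorem coprime_qm_general (q₀ q₁ q₂ q : ℕ) (m : ℤ)
    (hq₀ : Nat.Prime q₀) (hq₁ : Nat.Prime q₁)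
    (hq : Nat.Prime q) (hqeq : q = q₀ + q₁ - 1)
    (hm : 1 ≤ m) (hqm : ¬ (q : ℤ) ∣ m)
    (hcong : (q₂ : ℤ) ≡ -1 [ZMOD (q : ℤ)])
    (d : ℕ)
    (Cf Df : ℕ → ℤ)
    (hC : ∀ i ∈ Finset.Icc 1 (q₀ - 1),
      (Cf i : ℚ) * (m : ℚ) =
        (F0 q₀ q₁ q₂ q m).eval ((-((i : ℤ) * q₂ * m * (Nat.factorial (q - 1) : ℤ)) : ℤ) : ℚ))
    (hD : ∀ j ∈ Finset.Icc 1 (q₁ - 1),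
      (Df j : ℚ) * (m : ℚ) =
        (F0 q₀ q₁ q₂ q m).eval ((-((j : ℤ) * m * (Nat.factorial (q - 1) : ℤ)) : ℤ) : ℚ))
    (p : ℕ) (hp : Nat.Prime p) (hpm : m < (p : ℤ)) :
    (∀ i ∈ Finset.Icc 1 (q₀ - 1), IsCoprime ((q : ℤ) * m) ((q : ℤ) * (p : ℤ) ^ d + Cf i)) ∧
    (∀ j ∈ Finset.Icc 1 (q₁ - 1), IsCoprime ((q : ℤ) * m) ((q : ℤ) * (p : ℤ) ^ d + Df j)) := by
  have hn : q₀ - 1 + (q₁ - 1) + 1 = q := by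
    have := hq₀.two_le
    have := hq₁.two_le
    omega
  have hq_not_dvd : ∀ k : ℕ, 1 ≤ k → k < q → ¬ (q : ℤ) ∣ k := fun k hk hkq h =>
    Nat.not_dvd_of_pos_of_lt hk hkq (Int.natCast_dvd_natCast.mp h)
  have hq_not_dvd_q₂ : ¬ (q : ℤ) ∣ q₂ := fun h =>
    hq.one_lt.ne' (Nat.dvd_one.mp (Int.natCast_dvd_natCast.mp
      (dvd_neg.mp (by simpa using dvd_add hcong.dvd h))))
  refine ⟨fun i hi => ?_, fun j hj => ?_⟩
  · have hi' := Finset.mem_Icc.mp hi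
    exact isCoprime_of_mul_eq_eval_F0 hq hn hm hqm ((Nat.prime_iff_prime_int.mp hq).not_dvd_mul
      (hq_not_dvd i hi'.1 (by omega)) hq_not_dvd_q₂) (hC i hi) hp hpm d
  · have hj' := Finset.mem_Icc.mp hj
    exact isCoprime_of_mul_eq_eval_F0 hq hn hm hqm (hq_not_dvd j hj'.1 (by omega)) (hD j hj) hp
      hpm d

/-- If `p > m` is a prime such that `f(p)` is squarefree, then
`gcd(q·m, q·p^d + Cᵢ) = 1` and `gcd(q·m, q·p^d + Dⱼ) = 1` for all `i, j`. -/
theorem coprime_qm (q₀ q₁ q₂ q : ℕ) (m : ℤ)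
    (hq₀ : Nat.Prime q₀) (hq₁ : Nat.Prime q₁) (hlt : q₀ < q₁)
    (hq : Nat.Prime q) (hq3 : 3 ≤ q) (hqeq : q = q₀ + q₁ - 1)
    (hm : 1 ≤ m) (hmsf : Squarefree m) (hqm : ¬ (q : ℤ) ∣ m)
    (hq₂ : Nat.Prime q₂) (hcong : (q₂ : ℤ) ≡ -1 [ZMOD (q : ℤ)])
    (d : ℕ) (hd : 1 ≤ d)
    (Cf Df : ℕ → ℤ)
    (hC : ∀ i ∈ Finset.Icc 1 (q₀ - 1),
      (Cf i : ℚ) * (m : ℚ) =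
        (F0 q₀ q₁ q₂ q m).eval ((-((i : ℤ) * q₂ * m * (Nat.factorial (q - 1) : ℤ)) : ℤ) : ℚ))
    (hD : ∀ j ∈ Finset.Icc 1 (q₁ - 1),
      (Df j : ℚ) * (m : ℚ) =
        (F0 q₀ q₁ q₂ q m).eval ((-((j : ℤ) * m * (Nat.factorial (q - 1) : ℤ)) : ℤ) : ℚ))
    (p : ℕ) (hp : Nat.Prime p) (hpm : m < (p : ℤ))
    (hsf : Squarefree
      (((∏ i ∈ Finset.Icc 1 (q₀ - 1), (C (q : ℤ) * X ^ d + C (Cf i))) *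
        ∏ j ∈ Finset.Icc 1 (q₁ - 1), (C (q : ℤ) * X ^ d + C (Df j))).eval (p : ℤ))) :
    (∀ i ∈ Finset.Icc 1 (q₀ - 1), IsCoprime ((q : ℤ) * m) ((q : ℤ) * (p : ℤ) ^ d + Cf i)) ∧
    (∀ j ∈ Finset.Icc 1 (q₁ - 1), IsCoprime ((q : ℤ) * m) ((q : ℤ) * (p : ℤ) ^ d + Df j)) :=
  coprime_qm_general q₀ q₁ q₂ q m hq₀ hq₁ hq hqeq hm hqm hcong d Cf Df hC hD p hp hpm
end

section
/- Let p be a prime and let e_k denote the k-th elementary symmetric polynomial of the numbers c·1, c·2, …, c·(p−1) for an integer c divisible by (p−1)!. Then for 1 ≤ k ≤ p−2, the rational number p·e_k/(p−k) is an integer divisible by p. -/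
open Polynomial

/-- The `k`-th elementary symmetric function of `c·1, c·2, …, c·(p-1)`, read off as a
coefficient of `∏_{i=1}^{p-1} (x + c·i)`. -/
noncomputable def esymmOfMultiples (p : ℕ) (c : ℤ) (k : ℕ) : ℤ :=
  (∏ i ∈ Finset.Icc 1 (p - 1), (X + C (c * (i : ℤ)))).coeff (p - 1 - k)

/-- If `p` is prime and `(p-1)! ∣ c`, then for `1 ≤ k ≤ p-2` the rational number
`p·e_k/(p-k)` is an integer divisible by `p`, where `e_k` is the `k`-th elementary
symmetric function of `c·1, …, c·(p-1)`. -/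
theorem p_esymm_div_integral (p : ℕ) (hp : Nat.Prime p) (c : ℤ)
    (hc : (Nat.factorial (p - 1) : ℤ) ∣ c) (k : ℕ) (hk1 : 1 ≤ k) (hk : k ≤ p - 2) :
    ∃ z : ℤ, z * ((p : ℤ) - (k : ℤ)) = (p : ℤ) * esymmOfMultiples p c k ∧ (p : ℤ) ∣ z := by
  have hp2 : 2 ≤ p := hp.two_le
  have hkp1 : k ≤ p - 1 := le_trans hk (by omega)
  -- e_k is divisible by c
  have hcard : (Finset.Icc 1 (p - 1)).card = p - 1 := by
    rw [Nat.card_Icc]; omega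
  have hdvd_c : c ∣ esymmOfMultiples p c k := by
    unfold esymmOfMultiples
    rw [Finset.prod_X_add_C_coeff _ _ (by rw [hcard]; omega)]
    apply Finset.dvd_sum
    intro t ht
    rw [Finset.mem_powersetCard] at ht
    have htcard : t.card = k := by rw [ht.2, hcard]; omega
    obtain ⟨i, hi⟩ := Finset.card_pos.mp (by rw [htcard]; omega)
    exact dvd_trans (Dvd.intro _ rfl) (Finset.dvd_prod_of_mem _ hi)
  -- (p - k) divides (p-1)!
  have hfac : ((p - k : ℕ) : ℤ) ∣ (Nat.factorial (p - 1) : ℤ) := by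
    exact_mod_cast Nat.dvd_factorial (by omega) (by omega)
  have hdvd : ((p - k : ℕ) : ℤ) ∣ esymmOfMultiples p c k :=
    dvd_trans (dvd_trans hfac hc) hdvd_c
  obtain ⟨m, hm⟩ := hdvd
  refine ⟨(p : ℤ) * m, ?_, Dvd.intro _ rfl⟩
  have : ((p - k : ℕ) : ℤ) = (p : ℤ) - (k : ℤ) := by
    rw [Nat.cast_sub (by omega)]
  rw [← this, hm]; ring
end
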